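/- arXiv:2107.02719 — 4 statements merged into one kernel-verified Lean document; each statement's English description precedes it below -/
import Mathlib

section
/- Let p̃_tot(u, δ, x, w, ρ) = min(0, ρ − ρ_min) + max(0, ρ − ρ_max) + Σᵢ pᵢ(ρ), where each pᵢ(ρ) is a saturated droop power function (monotonically increasing, bounded, piecewise-affine in ρ) plus the constant load term. Then ρ ↦ p̃_tot(·, ρ) is continuous, monotonically increasing, and surjective onto ℝ. -/
/-!
Each saturated term is continuous, non-decreasing and bounded, and the two ramp terms are
continuous, non-decreasing and tend to `±∞` at `±∞`. Adding a bounded continuous function does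
not change these limits, so the intermediate value theorem makes the total surjective.
-/

noncomputable def sat (a x b : ℝ) : ℝ := max a (min x b)

open Filter Function

theorem continuous_sat (a b : ℝ) : Continuous fun x => sat a x b := by
  unfold sat
  fun_prop

theorem monotone_sat (a b : ℝ) : Monotone fun x => sat a x b :=
  fun _ _ h => max_le_max le_rfl (min_le_min_right b h)

theorem le_sat (a x b : ℝ) : a ≤ sat a x b :=
  le_max_left _ _

theorem sat_le {a b : ℝ} (h : a ≤ b) (x : ℝ) : sat a x b ≤ b :=
  max_le h (min_le_right _ _)

section Ramp

variable (c d : ℝ)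

theorem continuous_ramp : Continuous fun ρ : ℝ => min 0 (ρ - c) + max 0 (ρ - d) := by
  fun_prop

theorem monotone_ramp : Monotone fun ρ : ℝ => min 0 (ρ - c) + max 0 (ρ - d) :=
  fun _ _ h => add_le_add (min_le_min_left 0 (by linarith)) (max_le_max_left 0 (by linarith))

theorem tendsto_ramp_atTop : Tendsto (fun ρ : ℝ => min 0 (ρ - c) + max 0 (ρ - d)) atTop atTop := by
  refine tendsto_atTop_add_left_of_le' _ 0 ?_ ?_
  · filter_upwards [eventually_ge_atTop c] with ρ hρ
    exact le_min le_rfl (by linarith)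
  · exact tendsto_atTop_mono (fun ρ => le_max_right 0 (ρ - d))
      (tendsto_atTop_add_const_right _ _ tendsto_id)

theorem tendsto_ramp_atBot : Tendsto (fun ρ : ℝ => min 0 (ρ - c) + max 0 (ρ - d)) atBot atBot := by
  refine tendsto_atBot_add_right_of_ge' _ 0 ?_ ?_
  · exact tendsto_atBot_mono (fun ρ => min_le_right 0 (ρ - c))
      (tendsto_atBot_add_const_right _ _ tendsto_id)
  · filter_upwards [eventually_le_atBot d] with ρ hρ
    exact max_le le_rfl (by linarith)

end Ramp

theorem Continuous.surjective_add_of_bounded {α G : Type*} [TopologicalSpace α]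
    [ConditionallyCompleteLinearOrder α] [OrderTopology α] [DenselyOrdered α]
    [AddCommGroup G] [LinearOrder G] [IsOrderedAddMonoid G] [TopologicalSpace G]
    [OrderClosedTopology G] [ContinuousAdd G] {f g : α → G} (hf : Continuous f)
    (hf_top : Tendsto f atTop atTop) (hf_bot : Tendsto f atBot atBot) (hg : Continuous g)
    {m M : G} (hm : ∀ x, m ≤ g x) (hM : ∀ x, g x ≤ M) :
    Surjective fun x => f x + g x :=
  (hf.add hg).surjective (tendsto_atTop_add_right_of_le _ m hf_top hm)
    (tendsto_atBot_add_right_of_ge _ M hf_bot hM)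

theorem ptot_continuous_monotone_surjective_general
    (n : ℕ) (a b u χ : Fin n → ℝ) (L ρmin ρmax : ℝ)
    (hab : ∀ i, a i ≤ b i) (hχ : ∀ i, 0 ≤ χ i) :
    Continuous (fun ρ : ℝ =>
      min 0 (ρ - ρmin) + max 0 (ρ - ρmax) + (∑ i, sat (a i) (u i + χ i * ρ) (b i)) + L) ∧
    Monotone (fun ρ : ℝ =>
      min 0 (ρ - ρmin) + max 0 (ρ - ρmax) + (∑ i, sat (a i) (u i + χ i * ρ) (b i)) + L) ∧
    Function.Surjective (fun ρ : ℝ =>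
      min 0 (ρ - ρmin) + max 0 (ρ - ρmax) + (∑ i, sat (a i) (u i + χ i * ρ) (b i)) + L) := by
  have hsum_cont : Continuous fun ρ : ℝ => ∑ i, sat (a i) (u i + χ i * ρ) (b i) :=
    continuous_finsetSum _ fun i _ => (continuous_sat _ _).comp (by fun_prop)
  have hsum_mono : Monotone fun ρ : ℝ => ∑ i, sat (a i) (u i + χ i * ρ) (b i) :=
    fun _ _ h => Finset.sum_le_sum fun i _ =>
      monotone_sat _ _ (add_le_add_right (mul_le_mul_of_nonneg_left h (hχ i)) _)
  have hsum_surj := (continuous_ramp ρmin ρmax).surjective_add_of_bounded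
    (tendsto_ramp_atTop ρmin ρmax) (tendsto_ramp_atBot ρmin ρmax) hsum_cont
    (fun ρ => Finset.sum_le_sum fun i _ => le_sat _ _ _)
    (fun ρ => Finset.sum_le_sum fun i _ => sat_le (hab i) _)
  exact ⟨((continuous_ramp ρmin ρmax).add hsum_cont).add continuous_const,
    ((monotone_ramp ρmin ρmax).add hsum_mono).add_const L,
    (add_right_surjective L).comp hsum_surj⟩

/-- The augmented total power function
`p̃tot(ρ) = min(0, ρ − ρmin) + max(0, ρ − ρmax) + Σᵢ sat aᵢ (uᵢ + χᵢρ) bᵢ + L`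
(with `χᵢ ≥ 0`, `aᵢ ≤ bᵢ` and constant load term `L`) is continuous, monotone
(non-decreasing) and surjective onto ℝ. -/
theorem ptot_continuous_monotone_surjective
    (n : ℕ) (a b u χ : Fin n → ℝ) (L ρmin ρmax : ℝ)
    (hab : ∀ i, a i ≤ b i) (hχ : ∀ i, 0 ≤ χ i) (hρ : ρmin ≤ ρmax) :
    Continuous (fun ρ : ℝ =>
      min 0 (ρ - ρmin) + max 0 (ρ - ρmax) + (∑ i, sat (a i) (u i + χ i * ρ) (b i)) + L) ∧
    Monotone (fun ρ : ℝ =>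
      min 0 (ρ - ρmin) + max 0 (ρ - ρmax) + (∑ i, sat (a i) (u i + χ i * ρ) (b i)) + L) ∧
    Function.Surjective (fun ρ : ℝ =>
      min 0 (ρ - ρmin) + max 0 (ρ - ρmax) + (∑ i, sat (a i) (u i + χ i * ρ) (b i)) + L) :=
  ptot_continuous_monotone_surjective_general n a b u χ L ρmin ρmax hab hχ
end

section
/- (Lemma 1, part (a).) If x⁽²⁾ ≥ x⁽¹⁾ (componentwise storage energies) and all other variables (set-points u, switch statuses δ, disturbance w) are equal, then ρ̃(u, δ, x⁽²⁾, w) ≤ ρ̃(u, δ, x⁽¹⁾, w), where ρ̃ is the largest ρ solving the augmented power balance p̃_tot(u, δ, x, w, ρ) = 0. -/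
/-- Augmented total power of the microgrid:
`p̃tot = min(0,ρ−ρmin) + max(0,ρ−ρmax) + 1ᵀp_t + 1ᵀp_s + 1ᵀp_r + 1ᵀw_d`. -/
noncomputable def ptot (T S R D : ℕ)
    (ρmin ρmax Ts : ℝ)
    (uT χT ptmin ptmax : Fin T → ℝ) (δ : Fin T → Bool)
    (uS χS psmin psmax xmin xmax : Fin S → ℝ)
    (uR χR prmin wr : Fin R → ℝ) (wd : Fin D → ℝ)
    (x : Fin S → ℝ) (ρ : ℝ) : ℝ :=
  min 0 (ρ - ρmin) + max 0 (ρ - ρmax)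
    + (∑ i, if δ i then sat (ptmin i) (uT i + χT i * ρ) (ptmax i) else 0)
    + (∑ i, sat (max (psmin i) ((x i - xmax i) / Ts)) (uS i + χS i * ρ)
          (min (psmax i) ((x i - xmin i) / Ts)))
    + (∑ i, sat (prmin i) (uR i + χR i * ρ) (wr i))
    + (∑ i, wd i)

/-!
If `x⁽¹⁾ ≤ x⁽²⁾` then `p̃tot(x⁽¹⁾, ·) ≤ p̃tot(x⁽²⁾, ·)`, since the storage saturation bounds
grow with `x`. Were `ρ̃⁽¹⁾ < ρ̃⁽²⁾`, monotonicity in `ρ` would give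
`0 = p̃tot(x⁽¹⁾, ρ̃⁽¹⁾) ≤ p̃tot(x⁽¹⁾, ρ̃⁽²⁾) ≤ p̃tot(x⁽²⁾, ρ̃⁽²⁾) = 0`,
so `ρ̃⁽²⁾` would be a zero of `p̃tot(x⁽¹⁾, ·)` larger than the largest one.
-/

theorem le_of_isGreatest_of_monotone_of_le {α β : Type*} [LinearOrder α] [PartialOrder β]
    {f g : α → β} {c : β} {a b : α} (hf : Monotone f) (hfg : f ≤ g)
    (ha : IsGreatest {x | f x = c} a) (hb : g b = c) : b ≤ a := by
  by_contra! hab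
  have hfb : f b = c :=
    le_antisymm ((hfg b).trans_eq hb) (ha.1.symm.trans_le (hf hab.le))
  exact hab.not_ge (ha.2 hfb)

theorem sat_le_sat {a a' x x' b b' : ℝ} (ha : a ≤ a') (hx : x ≤ x') (hb : b ≤ b') :
    sat a x b ≤ sat a' x' b' :=
  max_le_max ha (min_le_min hx hb)

theorem monotone_sat_affine (a b u : ℝ) {χ : ℝ} (hχ : 0 ≤ χ) :
    Monotone fun ρ => sat a (u + χ * ρ) b :=
  fun _ _ h => sat_le_sat le_rfl (by gcongr) le_rfl

section ptot

variable {T S R D : ℕ} {ρmin ρmax Ts : ℝ}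
  {uT χT ptmin ptmax : Fin T → ℝ} {δ : Fin T → Bool}
  {uS χS psmin psmax xmin xmax : Fin S → ℝ}
  {uR χR prmin wr : Fin R → ℝ} {wd : Fin D → ℝ}

theorem ptot_monotone_rho (hχT : ∀ i, 0 ≤ χT i) (hχS : ∀ i, 0 ≤ χS i)
    (hχR : ∀ i, 0 ≤ χR i) (x : Fin S → ℝ) :
    Monotone (ptot T S R D ρmin ρmax Ts uT χT ptmin ptmax δ uS χS psmin psmax xmin xmax
      uR χR prmin wr wd x) := by
  intro ρ ρ' h
  unfold ptot
  gcongr with i _ i _ i _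
  · split_ifs
    · exact monotone_sat_affine _ _ _ (hχT i) h
    · exact le_rfl
  · exact monotone_sat_affine _ _ _ (hχS i) h
  · exact monotone_sat_affine _ _ _ (hχR i) h

theorem ptot_monotone_storage (hTs : 0 ≤ Ts) (ρ : ℝ) :
    Monotone fun x => ptot T S R D ρmin ρmax Ts uT χT ptmin ptmax δ uS χS psmin psmax
      xmin xmax uR χR prmin wr wd x ρ := by
  intro x x' hx
  simp only [ptot]
  gcongr with i _
  exact sat_le_sat (by gcongr; exact hx i) le_rfl (by gcongr; exact hx i)

end ptot

theorem rho_tilde_antitone_in_storage_energy_general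
    (T S R D : ℕ) (ρmin ρmax Ts : ℝ)
    (uT χT ptmin ptmax : Fin T → ℝ) (δ : Fin T → Bool)
    (uS χS psmin psmax xmin xmax : Fin S → ℝ)
    (uR χR prmin wr : Fin R → ℝ) (wd : Fin D → ℝ)
    (hTs : 0 < Ts)
    (hχT : ∀ i, 0 ≤ χT i) (hχS : ∀ i, 0 ≤ χS i) (hχR : ∀ i, 0 ≤ χR i)
    (x₁ x₂ : Fin S → ℝ) (hx : x₁ ≤ x₂)
    (ρstar₁ ρstar₂ : ℝ)
    (h₁ : IsGreatest {ρ : ℝ |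
      ptot T S R D ρmin ρmax Ts uT χT ptmin ptmax δ uS χS psmin psmax xmin xmax
        uR χR prmin wr wd x₁ ρ = 0} ρstar₁)
    (h₂ : IsGreatest {ρ : ℝ |
      ptot T S R D ρmin ρmax Ts uT χT ptmin ptmax δ uS χS psmin psmax xmin xmax
        uR χR prmin wr wd x₂ ρ = 0} ρstar₂) :
    ρstar₂ ≤ ρstar₁ :=
  le_of_isGreatest_of_monotone_of_le (ptot_monotone_rho hχT hχS hχR x₁)
    (fun ρ => ptot_monotone_storage hTs.le ρ hx) h₁ h₂.1

/-- Lemma 1(a): with non-negative inverse droop gains, if the storage energies satisfy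
`x⁽²⁾ ≥ x⁽¹⁾` componentwise and all other variables coincide, then the largest zero of
the augmented power balance satisfies `ρ̃⁽²⁾ ≤ ρ̃⁽¹⁾`. -/
theorem rho_tilde_antitone_in_storage_energy
    (T S R D : ℕ) (ρmin ρmax Ts : ℝ)
    (uT χT ptmin ptmax : Fin T → ℝ) (δ : Fin T → Bool)
    (uS χS psmin psmax xmin xmax : Fin S → ℝ)
    (uR χR prmin wr : Fin R → ℝ) (wd : Fin D → ℝ)
    (hρ : ρmin ≤ ρmax) (hTs : 0 < Ts)
    (hχT : ∀ i, 0 ≤ χT i) (hχS : ∀ i, 0 ≤ χS i) (hχR : ∀ i, 0 ≤ χR i)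
    (x₁ x₂ : Fin S → ℝ) (hx : x₁ ≤ x₂)
    (ρstar₁ ρstar₂ : ℝ)
    (h₁ : IsGreatest {ρ : ℝ |
      ptot T S R D ρmin ρmax Ts uT χT ptmin ptmax δ uS χS psmin psmax xmin xmax
        uR χR prmin wr wd x₁ ρ = 0} ρstar₁)
    (h₂ : IsGreatest {ρ : ℝ |
      ptot T S R D ρmin ρmax Ts uT χT ptmin ptmax δ uS χS psmin psmax xmin xmax
        uR χR prmin wr wd x₂ ρ = 0} ρstar₂) :
    ρstar₂ ≤ ρstar₁ :=
  rho_tilde_antitone_in_storage_energy_general T S R D ρmin ρmax Ts uT χT ptmin ptmax δ uS χS psmin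
    psmax xmin xmax uR χR prmin wr wd hTs hχT hχS hχR x₁ x₂ hx ρstar₁ ρstar₂ h₁ h₂
end

section
/- (Lemma 2, one-step comparison.) Consider one prediction step with common controls u, δ and two scenarios with disturbances w⁽²⁾ ≥ w⁽¹⁾ and previous storage energies x⁽²⁾ ≥ x⁽¹⁾. Then the resulting power-sharing variables satisfy ρ⁽²⁾ ≤ ρ⁽¹⁾, the conventional powers satisfy p_t⁽²⁾ ≤ p_t⁽¹⁾, and the updated storage energies satisfy x⁽²⁾' ≥ x⁽¹⁾'. -/
/-- Lemma 2 (one-step comparison): with common controls `u, δ`, two scenarios with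
disturbances `w⁽²⁾ ≥ w⁽¹⁾` and previous storage energies `x⁽²⁾ ≥ x⁽¹⁾` satisfy
`ρ⁽²⁾ ≤ ρ⁽¹⁾`, componentwise `p_t⁽²⁾ ≤ p_t⁽¹⁾` and componentwise
`x⁽²⁾' ≥ x⁽¹⁾'`, where `ρ⁽ⁱ⁾ = ρ̃(x⁽ⁱ⁾, w⁽ⁱ⁾)` with `ρ̃` antitone in both
arguments (Lemma 1), the conventional power is
`p_t = δ ∧ sat(p_t_min, u_t + χ_t ρ, p_t_max)` with `χ_t ≥ 0`, and the storage update
is `p̃_s = sat(p_s_min, u_s + χ_s ρ, p_s_max)`, `x' = sat(x_min, x − Ts·p̃_s, x_max)`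
with `χ_s ≥ 0`, `Ts > 0`. -/
theorem one_step_comparison
    (T S M : ℕ) (Ts : ℝ) (hTs : 0 < Ts)
    (ρtilde : (Fin S → ℝ) → (Fin M → ℝ) → ℝ)
    (hρ : ∀ (x₁ x₂ : Fin S → ℝ) (w₁ w₂ : Fin M → ℝ),
      x₁ ≤ x₂ → w₁ ≤ w₂ → ρtilde x₂ w₂ ≤ ρtilde x₁ w₁)
    (uT χT ptmin ptmax : Fin T → ℝ) (δ : Fin T → Bool) (hχT : ∀ i, 0 ≤ χT i)
    (uS χS psmin psmax xmin xmax : Fin S → ℝ) (hχS : ∀ i, 0 ≤ χS i)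
    (hpt : ∀ i, ptmin i ≤ ptmax i) (hps : ∀ i, psmin i ≤ psmax i)
    (hxm : ∀ i, xmin i ≤ xmax i)
    (x₁ x₂ : Fin S → ℝ) (w₁ w₂ : Fin M → ℝ)
    (hx : x₁ ≤ x₂) (hw : w₁ ≤ w₂) :
    ρtilde x₂ w₂ ≤ ρtilde x₁ w₁ ∧
    (∀ i : Fin T,
      (if δ i then sat (ptmin i) (uT i + χT i * ρtilde x₂ w₂) (ptmax i) else 0) ≤
      (if δ i then sat (ptmin i) (uT i + χT i * ρtilde x₁ w₁) (ptmax i) else 0)) ∧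
    (∀ i : Fin S,
      sat (xmin i) (x₁ i - Ts * sat (psmin i) (uS i + χS i * ρtilde x₁ w₁) (psmax i)) (xmax i) ≤
      sat (xmin i) (x₂ i - Ts * sat (psmin i) (uS i + χS i * ρtilde x₂ w₂) (psmax i)) (xmax i)) := by
  have hr : ρtilde x₂ w₂ ≤ ρtilde x₁ w₁ := hρ _ _ _ _ hx hw
  have hsat : ∀ a b y z : ℝ, y ≤ z → sat a y b ≤ sat a z b := fun a b y z h =>
    max_le_max le_rfl (min_le_min h le_rfl)
  refine ⟨hr, fun i => ?_, fun i => ?_⟩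
  · split
    · exact hsat _ _ _ _ (by nlinarith [hχT i])
    · exact le_rfl
  · have h1 : sat (psmin i) (uS i + χS i * ρtilde x₂ w₂) (psmax i) ≤
        sat (psmin i) (uS i + χS i * ρtilde x₁ w₁) (psmax i) :=
      hsat _ _ _ _ (by nlinarith [hχS i])
    exact hsat _ _ _ _ (by nlinarith [hx i])
end

section
/- (Counterexample to converse of Theorem 3, two-unit case.) Consider two units without saturation, with powers p₁ = p₁_min + χ₁ρ and p₂ = p₂_max + χ₂ρ, χ₁, χ₂ > 0, p₁_min < p₁_max, p₂_min < p₂_max. Then the constraints p₁ ∈ [p₁_min, p₁_max] and p₂ ∈ [p₂_min, p₂_max] hold if and only if ρ = 0; in particular no ρ ≠ 0 is feasible. By contrast, with saturation (pᵢ = sat(pᵢ_min, uᵢ + χᵢρ, pᵢ_max), u₁ = p₁_min, u₂ = p₂_max), for every ρ > 0 we get p₁ = min(p₁_min + χ₁ρ, p₁_max) > p₁_min while p₂ = p₂_max, and for every ρ < 0 we get p₂ < p₂_max while p₁ = p₁_min, so total power can be both increased and decreased. -/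
/-- Counterexample to the converse of Theorem 3 (two-unit case): without saturation,
with set-points `u₁ = p₁min`, `u₂ = p₂max` and droop laws `p₁ = p₁min + χ₁ρ`,
`p₂ = p₂max + χ₂ρ`, the power constraints hold iff `ρ = 0`; with saturation, for
every `ρ > 0` unit 1 strictly increases its power while unit 2 stays at `p₂max`,
and for every `ρ < 0` unit 2 strictly decreases while unit 1 stays at `p₁min`. -/
theorem two_unit_counterexample
    (χ₁ χ₂ p₁min p₁max p₂min p₂max : ℝ)
    (hχ₁ : 0 < χ₁) (hχ₂ : 0 < χ₂)
    (h₁ : p₁min < p₁max) (h₂ : p₂min < p₂max) :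
    (∀ ρ : ℝ,
      (p₁min ≤ p₁min + χ₁ * ρ ∧ p₁min + χ₁ * ρ ≤ p₁max ∧
       p₂min ≤ p₂max + χ₂ * ρ ∧ p₂max + χ₂ * ρ ≤ p₂max) ↔ ρ = 0) ∧
    (∀ ρ : ℝ, 0 < ρ →
      p₁min < sat p₁min (p₁min + χ₁ * ρ) p₁max ∧
      sat p₂min (p₂max + χ₂ * ρ) p₂max = p₂max) ∧
    (∀ ρ : ℝ, ρ < 0 →
      sat p₂min (p₂max + χ₂ * ρ) p₂max < p₂max ∧
      sat p₁min (p₁min + χ₁ * ρ) p₁max = p₁min) := by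
  refine ⟨fun ρ => ⟨fun ⟨a,b,c,d⟩ => ?_, fun h => by simp [h, le_of_lt h₂, h₁.le]⟩,
    fun ρ hρ => ⟨?_, ?_⟩, fun ρ hρ => ⟨?_, ?_⟩⟩
  · nlinarith
  · have h : p₁min < p₁min + χ₁ * ρ := by nlinarith
    simp only [sat, lt_max_iff, lt_min_iff]
    right; exact ⟨h, h₁⟩
  · have : min (p₂max + χ₂ * ρ) p₂max = p₂max := min_eq_right (by nlinarith)
    simp [sat, this, le_of_lt h₂]
  · simp only [sat]
    have h : min (p₂max + χ₂ * ρ) p₂max = p₂max + χ₂ * ρ := min_eq_left (by nlinarith)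
    rw [h]
    rcases le_or_gt (p₂max + χ₂ * ρ) p₂min with hc | hc
    · simp [max_eq_left hc]; linarith
    · rw [max_eq_right hc.le]; nlinarith
  · simp only [sat]
    rcases le_or_gt (p₁min + χ₁ * ρ) p₁max with hc | hc
    · rw [min_eq_left hc, max_eq_left (by nlinarith)]
    · rw [min_eq_right hc.le, max_eq_right h₁.le]
      nlinarith
end
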